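/- Let x₀,…,xₘ ∈ ℂⁿ, X = [x₀ … x_{m−1}] = U Σ V* (reduced SVD), Y = [x₁ … xₘ], A = Y X⁺, S = U* Y V Σ^{−1}, c = X⁺ xₘ, q = xₘ − Xc. Let v be an eigenvector of S with eigenvalue λ and ϑ = U v. Then the following are equivalent: (i) A ϑ = λ ϑ and ϑ ≠ 0 is an eigenvector of A; (ii) A ϑ ∈ im(X); (iii) ⟨eₘ, X⁺ ϑ⟩ · q = 0; (iv) xₘ ∈ span(x₀,…,x_{m−1}) or ⟨eₘ, V Σ^{−1} v⟩ = 0. -/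
import Mathlib


open Matrix

def IsMoorePenrose {n m : ℕ} (X : Matrix (Fin n) (Fin m) ℂ)
    (P : Matrix (Fin m) (Fin n) ℂ) : Prop :=
  X * P * X = X ∧ P * X * P = P ∧ (X * P)ᴴ = X * P ∧ (P * X)ᴴ = P * X

/-- Uniqueness of the Moore–Penrose pseudoinverse. -/
lemma mp_unique {n m : ℕ} {X : Matrix (Fin n) (Fin m) ℂ}
    {P Q : Matrix (Fin m) (Fin n) ℂ}
    (hP : IsMoorePenrose X P) (hQ : IsMoorePenrose X Q) : P = Q := by
  obtain ⟨hP1, hP2, hP3, hP4⟩ := hP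
  obtain ⟨hQ1, hQ2, hQ3, hQ4⟩ := hQ
  have hXP : X * P = X * Q := by
    calc X * P = (X * Q * X) * P := by rw [hQ1]
    _ = (X * Q) * (X * P) := by simp only [Matrix.mul_assoc]
    _ = (X * Q)ᴴ * (X * P)ᴴ := by rw [hQ3, hP3]
    _ = ((X * P) * (X * Q))ᴴ := (conjTranspose_mul _ _).symm
    _ = ((X * P * X) * Q)ᴴ := by simp only [Matrix.mul_assoc]
    _ = (X * Q)ᴴ := by rw [hP1]
    _ = X * Q := hQ3
  have hPX : P * X = Q * X := by
    calc P * X = P * (X * Q * X) := by rw [hQ1]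
    _ = (P * X) * (Q * X) := by simp only [Matrix.mul_assoc]
    _ = (P * X)ᴴ * (Q * X)ᴴ := by rw [hP4, hQ4]
    _ = ((Q * X) * (P * X))ᴴ := (conjTranspose_mul _ _).symm
    _ = (Q * (X * P * X))ᴴ := by simp only [Matrix.mul_assoc]
    _ = (Q * X)ᴴ := by rw [hP1]
    _ = Q * X := hQ4
  calc P = P * X * P := hP2.symm
  _ = Q * X * P := by rw [hPX]
  _ = Q * (X * P) := Matrix.mul_assoc _ _ _
  _ = Q * (X * Q) := by rw [hXP]
  _ = Q * X * Q := (Matrix.mul_assoc _ _ _).symm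
  _ = Q := hQ2

theorem stmt15 {n m r : ℕ} (x : Fin (m + 2) → Fin n → ℂ)
    (X Y : Matrix (Fin n) (Fin (m + 1)) ℂ)
    (hX : X = Matrix.of fun i j => x j.castSucc i)
    (hY : Y = Matrix.of fun i j => x j.succ i)
    (U : Matrix (Fin n) (Fin r) ℂ) (V : Matrix (Fin (m + 1)) (Fin r) ℂ)
    (σ : Fin r → ℝ) (hσ : ∀ i, σ i ≠ 0)
    (Sig : Matrix (Fin r) (Fin r) ℂ)
    (hSig : Sig = Matrix.diagonal fun i => (σ i : ℂ))
    (hU : Uᴴ * U = 1) (hV : Vᴴ * V = 1)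
    (hSVD : X = U * Sig * Vᴴ) (hr : X.rank = r)
    (P : Matrix (Fin (m + 1)) (Fin n) ℂ) (hP : IsMoorePenrose X P)
    (A : Matrix (Fin n) (Fin n) ℂ) (hA : A = Y * P)
    (S : Matrix (Fin r) (Fin r) ℂ) (hS : S = Uᴴ * Y * (V * Sig⁻¹))
    (c : Fin (m + 1) → ℂ) (hc : c = P.mulVec (x (Fin.last (m + 1))))
    (q : Fin n → ℂ) (hq : q = x (Fin.last (m + 1)) - X.mulVec c)
    (lam : ℂ) (v : Fin r → ℂ) (hv : v ≠ 0) (heig : S.mulVec v = lam • v)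
    (ϑ : Fin n → ℂ) (hϑ : ϑ = U.mulVec v) :
    ((A.mulVec ϑ = lam • ϑ ∧ ϑ ≠ 0) ↔ (∃ z, X.mulVec z = A.mulVec ϑ)) ∧
    ((∃ z, X.mulVec z = A.mulVec ϑ) ↔ P.mulVec ϑ (Fin.last m) • q = 0) ∧
    (P.mulVec ϑ (Fin.last m) • q = 0 ↔
      ((∃ z, X.mulVec z = x (Fin.last (m + 1))) ∨
        (V * Sig⁻¹).mulVec v (Fin.last m) = 0)) := by
  -- Sig is invertible
  have hdet : IsUnit Sig.det := by
    rw [hSig, Matrix.det_diagonal, isUnit_iff_ne_zero]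
    simp only [Finset.prod_ne_zero_iff]
    intro i _
    exact_mod_cast Complex.ofReal_ne_zero.mpr (hσ i)
  have hs1 : Sig * Sig⁻¹ = 1 := Matrix.mul_nonsing_inv _ hdet
  have hs2 : Sig⁻¹ * Sig = 1 := Matrix.nonsing_inv_mul _ hdet
  -- helper rewrites
  have hU' : ∀ {k : ℕ} (Z : Matrix (Fin r) (Fin k) ℂ), Uᴴ * (U * Z) = Z := by
    intro k Z; rw [← Matrix.mul_assoc, hU, Matrix.one_mul]
  have hV' : ∀ {k : ℕ} (Z : Matrix (Fin r) (Fin k) ℂ), Vᴴ * (V * Z) = Z := by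
    intro k Z; rw [← Matrix.mul_assoc, hV, Matrix.one_mul]
  have hs1' : ∀ {k : ℕ} (Z : Matrix (Fin r) (Fin k) ℂ), Sig * (Sig⁻¹ * Z) = Z := by
    intro k Z; rw [← Matrix.mul_assoc, hs1, Matrix.one_mul]
  have hs2' : ∀ {k : ℕ} (Z : Matrix (Fin r) (Fin k) ℂ), Sig⁻¹ * (Sig * Z) = Z := by
    intro k Z; rw [← Matrix.mul_assoc, hs2, Matrix.one_mul]
  have hUUX : U * Uᴴ * X = X := by
    rw [hSVD]; simp only [Matrix.mul_assoc, hU']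
  -- P is V Sig⁻¹ Uᴴ
  have hXQ : X * (V * Sig⁻¹ * Uᴴ) = U * Uᴴ := by
    rw [hSVD]; simp only [Matrix.mul_assoc, hV', hs1']
  have hQX : (V * Sig⁻¹ * Uᴴ) * X = V * Vᴴ := by
    rw [hSVD]; simp only [Matrix.mul_assoc, hU', hs2']
  have hQmp : IsMoorePenrose X (V * Sig⁻¹ * Uᴴ) := by
    refine ⟨?_, ?_, ?_, ?_⟩
    · rw [hXQ, hUUX]
    · rw [hQX]; simp only [Matrix.mul_assoc, hV']
    · rw [hXQ]; simp only [conjTranspose_mul, conjTranspose_conjTranspose]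
    · rw [hQX]; simp only [conjTranspose_mul, conjTranspose_conjTranspose]
  have hPQ : P = V * Sig⁻¹ * Uᴴ := mp_unique hP hQmp
  have hQU : V * Sig⁻¹ * Uᴴ * U = V * Sig⁻¹ := by
    rw [Matrix.mul_assoc, hU, Matrix.mul_one]
  -- basic vector identities
  obtain ⟨w, hw⟩ : ∃ w, w = (V * Sig⁻¹).mulVec v := ⟨_, rfl⟩
  rw [← hw]
  have hPth : P.mulVec ϑ = w := by
    rw [hPQ, hϑ, mulVec_mulVec, hQU, hw]
  have hAth : A.mulVec ϑ = Y.mulVec w := by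
    rw [hA, hϑ, mulVec_mulVec, hPQ, Matrix.mul_assoc Y, hQU, ← mulVec_mulVec, ← hw]
  have hUAth : Uᴴ.mulVec (A.mulVec ϑ) = lam • v := by
    rw [hAth, hw, mulVec_mulVec, mulVec_mulVec, ← hS, heig]
  have hUUA : (U * Uᴴ).mulVec (A.mulVec ϑ) = lam • ϑ := by
    rw [← mulVec_mulVec, hUAth, mulVec_smul, ← hϑ]
  have hthne : ϑ ≠ 0 := by
    intro h
    apply hv
    have hvv : Uᴴ.mulVec ϑ = v := by rw [hϑ, mulVec_mulVec, hU, one_mulVec]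
    rw [h, mulVec_zero] at hvv
    exact hvv.symm
  have hXw : X.mulVec w = ϑ := by
    have h3 : X * (V * Sig⁻¹) = U := by
      rw [hSVD]; simp only [Matrix.mul_assoc, hV', hs1, Matrix.mul_one]
    rw [hw, mulVec_mulVec, h3, ← hϑ]
  -- the companion-type matrix
  obtain ⟨Cc, hCc⟩ : ∃ Cc : Matrix (Fin (m + 1)) (Fin (m + 1)) ℂ, Cc =
      Matrix.of fun i j => if j = Fin.last m then c i else if i = j + 1 then 1 else 0 :=
    ⟨_, rfl⟩
  have hYdec : ∀ u : Fin (m + 1) → ℂ,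
      Y.mulVec u = X.mulVec (Cc.mulVec u) + u (Fin.last m) • q := by
    have hYmat : Y = X * Cc + Matrix.of fun i j => if j = Fin.last m then q i else 0 := by
      ext i j
      by_cases hj : j = Fin.last m
      · subst hj
        have hXc : (X * Cc) i (Fin.last m) = X.mulVec c i := by
          simp [hCc, Matrix.mul_apply, Matrix.mulVec, dotProduct]
        simp only [Matrix.add_apply, hXc, Matrix.of_apply, if_pos rfl]
        rw [hY, hq]
        simp only [Matrix.of_apply, Fin.succ_last, Pi.sub_apply, if_true, Nat.succ_eq_add_one]
        ring
      · have hCcj : ∀ k, Cc k j = if k = j + 1 then (1 : ℂ) else 0 := by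
          intro k; simp [hCc, hj]
        have hsum : (X * Cc) i j = X i (j + 1) := by
          simp [Matrix.mul_apply, hCcj, mul_ite, Finset.sum_ite_eq']
        have hval : ((j + 1 : Fin (m + 1)) : ℕ) = (j : ℕ) + 1 := by
          rw [Fin.val_add_one, if_neg hj]
        have hcast : (j + 1 : Fin (m + 1)).castSucc = j.succ := by
          apply Fin.ext
          simp [hval]
        simp only [Matrix.add_apply, hsum, Matrix.of_apply, if_neg hj, add_zero]
        rw [hX, hY]
        simp [hcast]
    intro u
    rw [hYmat, add_mulVec, ← mulVec_mulVec]
    congr 1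
    ext i
    simp only [Matrix.mulVec, dotProduct, Matrix.of_apply, ite_mul, zero_mul,
      Finset.sum_ite_eq', Finset.mem_univ, if_pos, Pi.smul_apply, smul_eq_mul]
    ring
  have hdecomp : A.mulVec ϑ = X.mulVec (Cc.mulVec w) + w (Fin.last m) • q := by
    rw [hAth]; exact hYdec w
  have h5 : (X * P).mulVec (x (Fin.last (m + 1))) = X.mulVec c := by
    rw [hc, mulVec_mulVec]
  have hXPq : (X * P).mulVec q = 0 := by
    rw [hq, mulVec_sub, h5, mulVec_mulVec, hP.1, sub_self]
  have hαw : P.mulVec ϑ (Fin.last m) = w (Fin.last m) := by rw [hPth]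
  have hqiff : q = 0 ↔ ∃ z, X.mulVec z = x (Fin.last (m + 1)) := by
    constructor
    · intro h
      refine ⟨c, ?_⟩
      have h2 : x (Fin.last (m + 1)) - X.mulVec c = 0 := by rw [← hq, h]
      exact (sub_eq_zero.mp h2).symm
    · rintro ⟨z, hz⟩
      rw [hq, hc, ← hz, mulVec_mulVec, mulVec_mulVec, hP.1, sub_self]
  refine ⟨?_, ?_, ?_⟩
  · constructor
    · rintro ⟨h1, -⟩
      exact ⟨lam • w, by rw [mulVec_smul, hXw, h1]⟩
    · rintro ⟨z, hz⟩
      refine ⟨?_, hthne⟩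
      calc A.mulVec ϑ = X.mulVec z := hz.symm
      _ = (U * Uᴴ).mulVec (X.mulVec z) := by rw [mulVec_mulVec, hUUX]
      _ = (U * Uᴴ).mulVec (A.mulVec ϑ) := by rw [hz]
      _ = lam • ϑ := hUUA
  · rw [hαw]
    constructor
    · rintro ⟨z, hz⟩
      have hg : w (Fin.last m) • q = X.mulVec (z - Cc.mulVec w) := by
        rw [mulVec_sub, hz, hdecomp]
        abel
      calc w (Fin.last m) • q = X.mulVec (z - Cc.mulVec w) := hg
      _ = (X * P * X).mulVec (z - Cc.mulVec w) := by rw [hP.1]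
      _ = (X * P).mulVec (X.mulVec (z - Cc.mulVec w)) :=
        (mulVec_mulVec (z - Cc.mulVec w) (X * P) X).symm
      _ = (X * P).mulVec (w (Fin.last m) • q) := by rw [← hg]
      _ = w (Fin.last m) • (X * P).mulVec q := mulVec_smul _ _ _
      _ = 0 := by rw [hXPq, smul_zero]
    · intro h
      exact ⟨Cc.mulVec w, by rw [hdecomp, h, add_zero]⟩
  · rw [hαw, smul_eq_zero]
    constructor
    · rintro (h | h)
      · exact Or.inr h
      · exact Or.inl (hqiff.mp h)
    · rintro (h | h)
      · exact Or.inr (hqiff.mpr h)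
      · exact Or.inl h
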